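/- Let a > 0 and let k : [0, ∞) → ℝ be continuous with k(s) ≤ −a² for all s, let F be the solution of F'' + kF = 0 with F(0) = 0, F'(0) = 1, and define g(r) = exp(−∫ᵣ^∞ dt/F(t)) for r > 0. Then g(r) → 0 as r → 0⁺ and the limit c = lim_{r→0⁺} g(r)/r exists and is a positive real number. -/

import Mathlib

/-!
Since `k ≤ -a² < 0`, `(F F')' = F'² - k F² ≥ 0`, so `F F' ≥ 0`; then the energy
`F'² - a² F²`, whose derivative is `2 F F' (-k - a²)`, is nondecreasing, hence `F'² ≥ 1 + a² F²`.
As `F'` is continuous with `F'(0) = 1`, this forces `F' ≥ 1`, so `F(s) ≥ s`, and `F' ≥ a F` gives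
exponential growth of `F`, so `1/F` is integrable at infinity. Near `0`, `|F(t) - t| ≤ C t²`, so
`φ(t) = 1/t - 1/F(t)` is bounded on `(0, 1]`. Writing `∫ᵣ^∞ 1/F = -log r - ∫ᵣ¹ φ + ∫₁^∞ 1/F` gives
`g(r)/r = exp (∫ᵣ¹ φ - ∫₁^∞ 1/F)`, which tends to `exp (∫₀¹ φ - ∫₁^∞ 1/F) > 0`; finally
`g(r) = r · g(r)/r → 0`.
-/

open Set Real Filter Topology MeasureTheory

lemma monotoneOn_Ici_of_hasDerivWithinAt_nonneg {f f' : ℝ → ℝ} {x₀ : ℝ}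
    (hf : ∀ x ∈ Ici x₀, HasDerivWithinAt f (f' x) (Ici x₀) x)
    (hf'₀ : ∀ x > x₀, 0 ≤ f' x) :
    MonotoneOn f (Ici x₀) :=
  monotoneOn_of_hasDerivWithinAt_nonneg (convex_Ici x₀)
    (fun x hx => (hf x hx).continuousWithinAt)
    (by simpa using fun x hx => (hf x (le_of_lt hx)).mono Ioi_subset_Ici_self)
    (by simpa using hf'₀)

lemma one_le_of_one_le_sq {f : ℝ → ℝ} (hf : ContinuousOn f (Ici 0)) (h0 : f 0 = 1)
    (hsq : ∀ s ∈ Ici (0 : ℝ), 1 ≤ f s ^ 2) : ∀ s ∈ Ici (0 : ℝ), 1 ≤ f s := by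
  intro s hs
  by_contra! hlt
  have hneg : f s ≤ -1 := by nlinarith [hsq s hs]
  obtain ⟨t, ht, hft⟩ : (0 : ℝ) ∈ f '' Icc 0 s :=
    intermediate_value_Icc' hs (hf.mono Icc_subset_Ici_self) ⟨by linarith, by rw [h0]; norm_num⟩
  exact absurd (hsq t ht.1) (by rw [hft]; norm_num)

structure IsJacobiSolution (k F F' F'' : ℝ → ℝ) : Prop where
  hasDerivWithinAt : ∀ s ∈ Ici (0 : ℝ), HasDerivWithinAt F (F' s) (Ici 0) s
  hasDerivWithinAt_deriv : ∀ s ∈ Ici (0 : ℝ), HasDerivWithinAt F' (F'' s) (Ici 0) s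
  eq_zero : ∀ s ∈ Ici (0 : ℝ), F'' s + k s * F s = 0
  apply_zero : F 0 = 0
  deriv_zero : F' 0 = 1

namespace IsJacobiSolution

variable {a : ℝ} {k F F' F'' : ℝ → ℝ}

lemma second_deriv_eq (hJ : IsJacobiSolution k F F' F'') {s : ℝ} (hs : 0 ≤ s) :
    F'' s = -k s * F s := by
  linarith [hJ.eq_zero s hs]

lemma mul_deriv_nonneg (hJ : IsJacobiSolution k F F' F'')
    (hk : ∀ s ∈ Ici (0 : ℝ), k s ≤ 0) :
    ∀ s ∈ Ici (0 : ℝ), 0 ≤ F s * F' s := by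
  have hmono : MonotoneOn (fun s => F s * F' s) (Ici 0) := by
    refine monotoneOn_Ici_of_hasDerivWithinAt_nonneg
      (fun s hs => (hJ.hasDerivWithinAt s hs).mul (hJ.hasDerivWithinAt_deriv s hs)) fun s hs => ?_
    rw [hJ.second_deriv_eq hs.le]
    nlinarith [mul_self_nonneg (F' s),
      mul_nonneg (neg_nonneg.2 (hk s hs.le)) (mul_self_nonneg (F s))]
  intro s hs
  simpa [hJ.apply_zero] using hmono self_mem_Ici hs hs

lemma one_le_energy (hJ : IsJacobiSolution k F F' F'')
    (hk : ∀ s ∈ Ici (0 : ℝ), k s ≤ -a ^ 2) :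
    ∀ s ∈ Ici (0 : ℝ), 1 ≤ F' s ^ 2 - a ^ 2 * F s ^ 2 := by
  have hFF' := hJ.mul_deriv_nonneg fun s hs => (hk s hs).trans (neg_nonpos.2 (sq_nonneg a))
  have hmono : MonotoneOn (fun s => F' s ^ 2 - a ^ 2 * F s ^ 2) (Ici 0) := by
    refine monotoneOn_Ici_of_hasDerivWithinAt_nonneg (fun s hs =>
      ((hJ.hasDerivWithinAt_deriv s hs).pow 2).sub (((hJ.hasDerivWithinAt s hs).pow 2).const_mul _))
      fun s hs => ?_
    rw [hJ.second_deriv_eq hs.le]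
    have := mul_nonneg (hFF' s hs.le) (by linarith [hk s hs.le] : 0 ≤ -k s - a ^ 2)
    simp only [Nat.reduceSub, pow_one, Nat.cast_ofNat]
    nlinarith
  intro s hs
  simpa [hJ.apply_zero, hJ.deriv_zero] using hmono self_mem_Ici hs hs

lemma one_le_deriv (hJ : IsJacobiSolution k F F' F'')
    (hk : ∀ s ∈ Ici (0 : ℝ), k s ≤ -a ^ 2) :
    ∀ s ∈ Ici (0 : ℝ), 1 ≤ F' s := by
  refine one_le_of_one_le_sq (fun s hs => (hJ.hasDerivWithinAt_deriv s hs).continuousWithinAt)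
    hJ.deriv_zero fun s hs => ?_
  nlinarith [hJ.one_le_energy hk s hs, sq_nonneg (a * F s)]

lemma self_le (hJ : IsJacobiSolution k F F' F'') (hk : ∀ s ∈ Ici (0 : ℝ), k s ≤ -a ^ 2) :
    ∀ s ∈ Ici (0 : ℝ), s ≤ F s := by
  have hmono : MonotoneOn (fun s => F s - s) (Ici 0) :=
    monotoneOn_Ici_of_hasDerivWithinAt_nonneg
      (fun s hs => (hJ.hasDerivWithinAt s hs).sub (hasDerivWithinAt_id s _))
      fun s hs => sub_nonneg.2 (hJ.one_le_deriv hk s hs.le)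
  intro s hs
  simpa [hJ.apply_zero] using hmono self_mem_Ici hs hs

lemma exp_le (hJ : IsJacobiSolution k F F' F'') (hk : ∀ s ∈ Ici (0 : ℝ), k s ≤ -a ^ 2) :
    ∀ s ∈ Ici (1 : ℝ), exp (a * (s - 1)) ≤ F s := by
  have hmono : MonotoneOn (fun s => F s * exp (-a * s)) (Ici 0) := by
    refine monotoneOn_Ici_of_hasDerivWithinAt_nonneg (fun s hs => (hJ.hasDerivWithinAt s hs).mul
      ((hasDerivWithinAt_id s _).const_mul (-a)).exp) fun s hs => ?_
    have hgrowth : a * F s ≤ F' s := by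
      nlinarith [hJ.one_le_energy hk s hs.le, hJ.one_le_deriv hk s hs.le]
    have := mul_nonneg (sub_nonneg.2 hgrowth) (exp_pos (-a * s)).le
    simp only [id_eq, mul_one]
    linarith
  intro s hs
  have h1 : F 1 * exp (-a * 1) ≤ F s * exp (-a * s) :=
    hmono (mem_Ici.2 zero_le_one) (mem_Ici.2 (zero_le_one.trans hs)) hs
  have hF1 : 1 ≤ F 1 := hJ.self_le hk 1 (mem_Ici.2 zero_le_one)
  calc exp (a * (s - 1)) ≤ F 1 * exp (a * (s - 1)) := le_mul_of_one_le_left (exp_pos _).le hF1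
    _ = F 1 * exp (-a * 1) * exp (a * s) := by rw [mul_assoc, ← exp_add]; ring_nf
    _ ≤ F s * exp (-a * s) * exp (a * s) := by gcongr
    _ = F s := by rw [mul_assoc, ← exp_add]; simp

end IsJacobiSolution

lemma integrableOn_one_div_Ioi_of_exp_le {f : ℝ → ℝ} {a : ℝ} (ha : 0 < a)
    (hf : ContinuousOn f (Ioi 1)) (hexp : ∀ s ∈ Ici (1 : ℝ), exp (a * (s - 1)) ≤ f s) :
    IntegrableOn (fun t => 1 / f t) (Ioi 1) := by
  have hle : ∀ t ∈ Ioi (1 : ℝ), exp (a * (t - 1)) ≤ f t :=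
    fun t ht => hexp t (Ioi_subset_Ici_self ht)
  have hpos : ∀ t ∈ Ioi (1 : ℝ), 0 < f t := fun t ht => (exp_pos _).trans_le (hle t ht)
  refine ((exp_neg_integrableOn_Ioi 1 ha).const_mul (exp a)).mono'
    ((continuousOn_const.div hf fun t ht => (hpos t ht).ne').aestronglyMeasurable measurableSet_Ioi)
    ((ae_restrict_iff' measurableSet_Ioi).2 (Eventually.of_forall fun t ht => ?_))
  rw [norm_of_nonneg (one_div_pos.2 (hpos t ht)).le, ← exp_add, one_div]
  calc (f t)⁻¹ ≤ (exp (a * (t - 1)))⁻¹ := inv_anti₀ (exp_pos _) (hle t ht)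
    _ = exp (a + -a * t) := by rw [← exp_neg]; ring_nf

lemma exists_abs_sub_le_mul_sq {f f' f'' : ℝ → ℝ}
    (hf : ∀ s ∈ Ici (0 : ℝ), HasDerivWithinAt f (f' s) (Ici 0) s)
    (hf' : ∀ s ∈ Ici (0 : ℝ), HasDerivWithinAt f' (f'' s) (Ici 0) s)
    (hf''c : ContinuousOn f'' (Ici 0)) (hf0 : f 0 = 0) (hf'0 : f' 0 = 1) :
    ∃ C ≥ 0, ∀ t ∈ Icc (0 : ℝ) 1, |f t - t| ≤ C * t ^ 2 := by
  obtain ⟨C, hC⟩ := isCompact_Icc.exists_bound_of_continuousOn (hf''c.mono Icc_subset_Ici_self)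
  have hderiv : ∀ x ∈ Icc (0 : ℝ) 1, ‖f' x - 1‖ ≤ C * x := by
    simpa [hf'0] using norm_image_sub_le_of_norm_deriv_le_segment'
      (fun x hx => (hf' x hx.1).mono Icc_subset_Ici_self) fun x hx => hC x (Ico_subset_Icc_self hx)
  have hC0 : 0 ≤ C := (norm_nonneg _).trans (hC 0 ⟨le_rfl, zero_le_one⟩)
  refine ⟨C, hC0, fun t ht => ?_⟩
  have := norm_image_sub_le_of_norm_deriv_le_segment' (f := fun x => f x - x) (C := C * t)
    (fun x hx => ((hf x hx.1).mono Icc_subset_Ici_self).sub (hasDerivWithinAt_id x _))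
    (fun x hx => (hderiv x ⟨hx.1, hx.2.le.trans ht.2⟩).trans
      (mul_le_mul_of_nonneg_left hx.2.le hC0))
    t ⟨ht.1, le_rfl⟩
  simpa [hf0, sq, mul_assoc] using this

lemma tendsto_exp_neg_integral_Ioi_div {h : ℝ → ℝ} (hc : ContinuousOn h (Ioi 0))
    (hint : IntegrableOn h (Ioi 1)) {C : ℝ}
    (hC : ∀ t ∈ Ioc (0 : ℝ) 1, |t⁻¹ - h t| ≤ C) :
    ∃ c > 0, Tendsto (fun r => exp (-∫ t in Ioi r, h t) / r) (𝓝[>] 0) (𝓝 c) := by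
  set φ : ℝ → ℝ := fun t => t⁻¹ - h t
  have hφc : ContinuousOn φ (Ioi 0) := (continuousOn_inv₀.mono fun _ ht => ne_of_gt ht).sub hc
  have hφint : IntegrableOn φ (uIcc 0 1) := by
    rw [uIcc_of_le zero_le_one, integrableOn_Icc_iff_integrableOn_Ioc]
    exact IntegrableOn.of_bound measure_Ioc_lt_top
      ((hφc.mono Ioc_subset_Ioi_self).aestronglyMeasurable measurableSet_Ioc) C
      ((ae_restrict_iff' measurableSet_Ioc).2 (Eventually.of_forall hC))
  have hformula : ∀ r ∈ Ioc (0 : ℝ) 1,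
      exp (-∫ t in Ioi r, h t) / r = exp ((∫ t in r..1, φ t) - ∫ t in Ioi 1, h t) := by
    intro r hr
    have hsub : uIcc r 1 ⊆ Ioi 0 := by
      rw [uIcc_of_le hr.2]; exact fun t ht => hr.1.trans_le ht.1
    have hinv : IntervalIntegrable (fun t : ℝ => t⁻¹) volume r 1 :=
      (continuousOn_inv₀.mono fun t ht => ne_of_gt (hsub ht)).intervalIntegrable
    have hh : IntervalIntegrable h volume r 1 := (hc.mono hsub).intervalIntegrable
    have hlog : ∫ t in r..1, t⁻¹ = -log r := by
      rw [integral_inv_of_pos hr.1 one_pos, one_div, log_inv]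
    rw [← intervalIntegral.integral_interval_add_Ioi' hh hint,
      intervalIntegral.integral_sub hinv hh, hlog,
      show ∀ A B : ℝ, -log r - A - B = -(A + B) - log r from fun A B => by ring,
      exp_sub, exp_log hr.1]
  have hprim : Tendsto (fun r => ∫ t in r..1, φ t) (𝓝[>] 0) (𝓝 (∫ t in 0..1, φ t)) := by
    refine (intervalIntegral.continuousOn_primitive_interval_left hφint 0
      left_mem_uIcc).tendsto.mono_left
      (nhdsWithin_le_of_mem (mem_of_superset (Ioc_mem_nhdsGT one_pos) ?_))
    rw [uIcc_of_le zero_le_one]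
    exact Ioc_subset_Icc_self
  refine ⟨_, exp_pos ((∫ t in 0..1, φ t) - ∫ t in Ioi 1, h t), ?_⟩
  refine ((continuous_exp.tendsto _).comp (hprim.sub_const _)).congr' ?_
  filter_upwards [Ioc_mem_nhdsGT one_pos] with r hr
  exact (hformula r hr).symm

lemma abs_inv_sub_one_div_le {t x C : ℝ} (ht : 0 < t) (htx : t ≤ x) (hC : 0 ≤ C)
    (h : |x - t| ≤ C * t ^ 2) : |t⁻¹ - 1 / x| ≤ C := by
  have hx : 0 < x := ht.trans_le htx
  rw [one_div, inv_sub_inv ht.ne' hx.ne', abs_div, abs_of_pos (mul_pos ht hx),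
    div_le_iff₀ (mul_pos ht hx)]
  calc |x - t| ≤ C * t ^ 2 := h
    _ ≤ C * (t * x) := by rw [sq]; gcongr

theorem stmt_11_general (a : ℝ) (ha : 0 < a) (k F F' F'' : ℝ → ℝ)
    (hk_le : ∀ s ∈ Set.Ici (0 : ℝ), k s ≤ -a ^ 2)
    (hF' : ∀ s ∈ Set.Ici (0 : ℝ), HasDerivWithinAt F (F' s) (Set.Ici 0) s)
    (hF'' : ∀ s ∈ Set.Ici (0 : ℝ), HasDerivWithinAt F' (F'' s) (Set.Ici 0) s)
    (hF''_cont : ContinuousOn F'' (Set.Ici 0))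
    (hODE : ∀ s ∈ Set.Ici (0 : ℝ), F'' s + k s * F s = 0)
    (hF0 : F 0 = 0) (hF'0 : F' 0 = 1)
    (g : ℝ → ℝ) (hg : ∀ r > (0 : ℝ), g r = Real.exp (-∫ t in Set.Ioi r, 1 / F t)) :
    Tendsto g (𝓝[>] 0) (𝓝 0) ∧
      ∃ c : ℝ, 0 < c ∧ Tendsto (fun r => g r / r) (𝓝[>] 0) (𝓝 c) := by
  have hFc : ContinuousOn F (Ici 0) := fun s hs => (hF' s hs).continuousWithinAt
  have hJ : IsJacobiSolution k F F' F'' := ⟨hF', hF'', hODE, hF0, hF'0⟩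
  have hle := hJ.self_le hk_le
  have hpos : ∀ t > 0, 0 < F t := fun t ht => ht.trans_le (hle t ht.le)
  obtain ⟨C, hC0, hC⟩ := exists_abs_sub_le_mul_sq hF' hF'' hF''_cont hF0 hF'0
  obtain ⟨c, hc, hlim⟩ := tendsto_exp_neg_integral_Ioi_div (h := fun t => 1 / F t)
    (continuousOn_const.div (hFc.mono Ioi_subset_Ici_self) fun t ht => (hpos t ht).ne')
    (integrableOn_one_div_Ioi_of_exp_le ha
      (hFc.mono fun t ht => mem_Ici.2 (zero_le_one.trans (le_of_lt ht))) (hJ.exp_le hk_le))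
    fun t ht => abs_inv_sub_one_div_le ht.1 (hle t ht.1.le) hC0 (hC t (Ioc_subset_Icc_self ht))
  have hlim' : Tendsto (fun r => g r / r) (𝓝[>] 0) (𝓝 c) :=
    hlim.congr' (eventually_nhdsWithin_of_forall fun r hr => by simp only [hg r hr])
  refine ⟨?_, c, hc, hlim'⟩
  have hprod := (tendsto_nhdsWithin_of_tendsto_nhds (tendsto_id (x := 𝓝 (0 : ℝ)))).mul hlim'
  rw [zero_mul] at hprod
  refine hprod.congr' (eventually_nhdsWithin_of_forall fun r hr => ?_)
  exact mul_div_cancel₀ _ (ne_of_gt (mem_Ioi.1 hr))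

/-- Properties of `g(r) = exp(-∫ᵣ^∞ dt/F(t))` from Lemma 5: `g(r) → 0` as `r → 0⁺`
and `g(r)/r` converges to a positive limit `c` as `r → 0⁺`. -/
theorem stmt_11 (a : ℝ) (ha : 0 < a) (k F F' F'' : ℝ → ℝ)
    (hk_cont : ContinuousOn k (Set.Ici 0))
    (hk_le : ∀ s ∈ Set.Ici (0 : ℝ), k s ≤ -a ^ 2)
    (hF' : ∀ s ∈ Set.Ici (0 : ℝ), HasDerivWithinAt F (F' s) (Set.Ici 0) s)
    (hF'' : ∀ s ∈ Set.Ici (0 : ℝ), HasDerivWithinAt F' (F'' s) (Set.Ici 0) s)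
    (hF''_cont : ContinuousOn F'' (Set.Ici 0))
    (hODE : ∀ s ∈ Set.Ici (0 : ℝ), F'' s + k s * F s = 0)
    (hF0 : F 0 = 0) (hF'0 : F' 0 = 1)
    (g : ℝ → ℝ) (hg : ∀ r > (0 : ℝ), g r = Real.exp (-∫ t in Set.Ioi r, 1 / F t)) :
    Tendsto g (𝓝[>] 0) (𝓝 0) ∧
      ∃ c : ℝ, 0 < c ∧ Tendsto (fun r => g r / r) (𝓝[>] 0) (𝓝 c) :=
  stmt_11_general a ha k F F' F'' hk_le hF' hF'' hF''_cont hODE hF0 hF'0 g hg
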